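/- arXiv:2004.07688 — 2 statements merged into one kernel-verified Lean document; each statement's English description precedes it below -/
import Mathlib

section
/- (Identifiability of the SIR model from its infected component.) Let T > 0, let λ, γ, λ₀, γ₀ > 0, ξ, ξ₀ > 0 and i_* > 0, and let (s, i) and (s₀, i₀) be differentiable functions [0,T] → ℝ satisfying the SIR ordinary differential equations s′(t) = −λ s(t) i(t), i′(t) = λ s(t) i(t) − γ i(t) with s(0) = ξ, i(0) = i_*, and s₀′(t) = −λ₀ s₀(t) i₀(t), i₀′(t) = λ₀ s₀(t) i₀(t) − γ₀ i₀(t) with s₀(0) = ξ₀, i₀(0) = i_*. Assume i₀(t) > 0 for all t ∈ [0,T] and that λ₀ s₀(t) − λ s(t) − γ₀ + γ = 0 for all t ∈ [0,T]. Then λ = λ₀, γ = γ₀ and ξ = ξ₀. -/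
/-- **Identifiability of the SIR model from its infected component.** If two SIR systems
`(s, i)` and `(s₀, i₀)` on `[0, T]`, with parameters `(λ, γ, ξ)` and `(λ₀, γ₀, ξ₀)` and the
same initial number of infected `i_* > 0`, are such that `i₀ > 0` on `[0, T]` and
`λ₀ s₀(t) − λ s(t) − γ₀ + γ = 0` for all `t ∈ [0, T]`, then `λ = λ₀`, `γ = γ₀` and
`ξ = ξ₀`. -/
theorem sir_identifiability
    (T lam gam lam0 gam0 ξ ξ0 istar : ℝ)
    (hT : 0 < T)
    (hlam : 0 < lam) (hgam : 0 < gam) (hlam0 : 0 < lam0) (hgam0 : 0 < gam0)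
    (hξ : 0 < ξ) (hξ0 : 0 < ξ0) (histar : 0 < istar)
    (s i s0 i0 : ℝ → ℝ)
    -- the SIR ordinary differential equations on [0, T]
    (hs : ∀ t ∈ Set.Icc (0 : ℝ) T,
      HasDerivWithinAt s (-(lam * s t * i t)) (Set.Icc (0 : ℝ) T) t)
    (hi : ∀ t ∈ Set.Icc (0 : ℝ) T,
      HasDerivWithinAt i (lam * s t * i t - gam * i t) (Set.Icc (0 : ℝ) T) t)
    (hs0 : ∀ t ∈ Set.Icc (0 : ℝ) T,
      HasDerivWithinAt s0 (-(lam0 * s0 t * i0 t)) (Set.Icc (0 : ℝ) T) t)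
    (hi0 : ∀ t ∈ Set.Icc (0 : ℝ) T,
      HasDerivWithinAt i0 (lam0 * s0 t * i0 t - gam0 * i0 t) (Set.Icc (0 : ℝ) T) t)
    -- initial conditions
    (hs_init : s 0 = ξ) (hi_init : i 0 = istar)
    (hs0_init : s0 0 = ξ0) (hi0_init : i0 0 = istar)
    -- positivity of the observed infected component
    (hi0_pos : ∀ t ∈ Set.Icc (0 : ℝ) T, 0 < i0 t)
    -- the identifiability relation Γ₁ ≡ 0
    (hGamma : ∀ t ∈ Set.Icc (0 : ℝ) T, lam0 * s0 t - lam * s t - gam0 + gam = 0) :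
    lam = lam0 ∧ gam = gam0 ∧ ξ = ξ0 := by
  have h0D : (0:ℝ) ∈ Set.Icc (0 : ℝ) T := ⟨le_refl 0, hT.le⟩
  have hud := uniqueDiffOn_Icc hT
  -- Step 1: i = i0 on [0, T]
  have hr : ∀ t ∈ Set.Icc (0 : ℝ) T,
      HasDerivWithinAt (fun u => i u / i0 u) 0 (Set.Icc (0 : ℝ) T) t := by
    intro t ht
    have h1 := (hi t ht).div (hi0 t ht) (hi0_pos t ht).ne'
    have hnum : ((lam * s t * i t - gam * i t) * i0 t
        - i t * (lam0 * s0 t * i0 t - gam0 * i0 t)) / (i0 t) ^ 2 = 0 := by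
      have : (lam * s t * i t - gam * i t) * i0 t
          - i t * (lam0 * s0 t * i0 t - gam0 * i0 t) = 0 := by
        linear_combination (-(i t * i0 t)) * hGamma t ht
      rw [this, zero_div]
    rwa [hnum] at h1
  have hrc := constant_of_has_deriv_right_zero
    (f := fun u => i u / i0 u) (a := (0:ℝ)) (b := T)
    (fun t ht => (hr t ht).continuousWithinAt)
    (fun t ht => (hr t (Set.Ico_subset_Icc_self ht)).mono_of_mem_nhdsWithin
      (Icc_mem_nhdsGE_of_mem ht))
  have hii0 : ∀ t ∈ Set.Icc (0 : ℝ) T, i t = i0 t := by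
    intro t ht
    have h2 := hrc t ht
    simp only [hi_init, hi0_init, div_self histar.ne'] at h2
    field_simp [(hi0_pos t ht).ne'] at h2
    exact h2
  -- Step 2: lam^2 * s = lam0^2 * s0 on [0, T]
  have key : ∀ t ∈ Set.Icc (0 : ℝ) T, lam ^ 2 * s t = lam0 ^ 2 * s0 t := by
    intro t ht
    have hgd : HasDerivWithinAt (fun u => lam0 * s0 u - lam * s u)
        (lam0 * -(lam0 * s0 t * i0 t) - lam * -(lam * s t * i t))
        (Set.Icc (0 : ℝ) T) t :=
      ((hs0 t ht).const_mul lam0).sub ((hs t ht).const_mul lam)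
    have hgz : HasDerivWithinAt (fun u => lam0 * s0 u - lam * s u) 0
        (Set.Icc (0 : ℝ) T) t := by
      refine (hasDerivWithinAt_const t (Set.Icc (0:ℝ) T) (gam0 - gam)).congr ?_ ?_
      · intro u hu; linear_combination hGamma u hu
      · linear_combination hGamma t ht
    have heq : lam0 * -(lam0 * s0 t * i0 t) - lam * -(lam * s t * i t) = 0 := by
      rw [← hgd.derivWithin (hud t ht), hgz.derivWithin (hud t ht)]
    have hipos : 0 < i0 t := hi0_pos t ht
    have hit : i t = i0 t := hii0 t ht
    have : (lam ^ 2 * s t - lam0 ^ 2 * s0 t) * i0 t = 0 := by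
      linear_combination heq - (lam ^ 2 * s t) * hit
    have := mul_eq_zero.1 this
    rcases this with h | h
    · linarith
    · exact absurd h hipos.ne'
  -- Step 3: lam0 * (lam0 - lam) * s0 is constant on [0, T]
  have hconst : ∀ t ∈ Set.Icc (0 : ℝ) T,
      lam0 * (lam0 - lam) * s0 t = lam * (gam - gam0) := by
    intro t ht
    have h3 := key t ht
    have h4 := hGamma t ht
    nlinarith [h3, h4]
  -- Step 4: differentiate the constant function to get lam = lam0
  have hlameq : lam = lam0 := by
    by_contra hne
    have hhd : HasDerivWithinAt (fun u => lam0 * (lam0 - lam) * s0 u)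
        (lam0 * (lam0 - lam) * -(lam0 * s0 0 * i0 0)) (Set.Icc (0 : ℝ) T) 0 :=
      (hs0 0 h0D).const_mul _
    have hhz : HasDerivWithinAt (fun u => lam0 * (lam0 - lam) * s0 u) 0
        (Set.Icc (0 : ℝ) T) 0 := by
      refine (hasDerivWithinAt_const 0 (Set.Icc (0:ℝ) T) (lam * (gam - gam0))).congr ?_ ?_
      · intro u hu; exact hconst u hu
      · exact hconst 0 h0D
    have heq : lam0 * (lam0 - lam) * -(lam0 * s0 0 * i0 0) = 0 := by
      rw [← hhd.derivWithin (hud 0 h0D), hhz.derivWithin (hud 0 h0D)]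
    rw [hs0_init, hi0_init] at heq
    have : lam0 - lam ≠ 0 := sub_ne_zero.2 (Ne.symm hne)
    have h5 : lam0 * (lam0 - lam) * -(lam0 * ξ0 * istar) ≠ 0 := by
      apply mul_ne_zero (mul_ne_zero hlam0.ne' this)
      simp only [neg_ne_zero]
      positivity
    exact h5 heq
  have hgameq : gam = gam0 := by
    have := hconst 0 h0D
    rw [hlameq] at this
    simp only [sub_self, mul_zero, zero_mul] at this
    have : gam - gam0 = 0 := by
      rcases mul_eq_zero.1 this.symm with h | h
      · exact absurd h hlam0.ne'
      · exact h
    linarith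
  refine ⟨hlameq, hgameq, ?_⟩
  have := hGamma 0 h0D
  rw [hs_init, hs0_init, hlameq, hgameq] at this
  have : lam0 * ξ0 = lam0 * ξ := by linarith
  exact (mul_left_cancel₀ hlam0.ne' this).symm
end

section
/- (Convergence in probability for triangular arrays.) For each n ≥ 1, let G_0^n ⊆ G_1^n ⊆ ⋯ ⊆ G_n^n be sub-σ-algebras of a probability space (Ω, F, P), and let ζ_k^n (1 ≤ k ≤ n) be square-integrable real random variables with ζ_k^n G_k^n-measurable. Let U be a real random variable. If (i) ∑_{k=1}^n E[ζ_k^n | G_{k−1}^n] → U in probability as n → ∞, and (ii) ∑_{k=1}^n E[(ζ_k^n)² | G_{k−1}^n] → 0 in probability as n → ∞, then ∑_{k=1}^n ζ_k^n → U in probability as n → ∞. -/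
/-!
Split `∑ ζ_k` into the martingale part `∑ (ζ_k - E[ζ_k | G_{k-1}])` and the predictable part
`∑ E[ζ_k | G_{k-1}]`, which tends to `U` by (i); it remains to show that the martingale part tends
to `0` in probability. This is a Lenglart-type domination by `V_k = ∑_{j ≤ k} E[ζ_j² | G_{j-1}]`:
keep only the increments with `V_k ≤ ε`. Since `V_k` is `G_{k-1}`-measurable, this is again a sum of
orthogonal martingale increments, whose conditional variances are bounded by `V_k - V_{k-1}`, so its
second moment is at most `ε`; and on `{V_n ≤ ε}` nothing was dropped. By Chebyshev,
`P(|∑ (ζ_k - E[ζ_k | G_{k-1}])| ≥ δ) ≤ P(V_n > ε) + ε / δ²`, and (ii) makes the first term small.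
-/

open MeasureTheory Filter

noncomputable section

open Finset ProbabilityTheory
open scoped ENNReal Topology

theorem sum_Icc_ite_sum_Icc_le {a : ℕ → ℝ} (ha : ∀ k, 0 ≤ a k) {ε : ℝ} (hε : 0 ≤ ε) :
    ∀ N, ∑ k ∈ Icc 1 N, (if ∑ j ∈ Icc 1 k, a j ≤ ε then a k else 0) ≤ ε
  | 0 => by simpa using hε
  | N + 1 => by
    rw [sum_Icc_succ_top (by omega)]
    split_ifs with hN
    · have : ∑ k ∈ Icc 1 N, (if ∑ j ∈ Icc 1 k, a j ≤ ε then a k else 0) ≤ ∑ k ∈ Icc 1 N, a k :=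
        sum_le_sum fun k _ => by split_ifs <;> simp [ha k]
      rw [sum_Icc_succ_top (by omega)] at hN
      linarith
    · simpa using sum_Icc_ite_sum_Icc_le ha hε N

theorem ENNReal.tendsto_nhds_zero_of_forall_le_add {ι : Type*} {l : Filter ι} {a : ι → ℝ≥0∞}
    (h : ∀ η : ℝ, 0 < η → ∃ b : ι → ℝ≥0∞, Tendsto b l (𝓝 0) ∧ ∀ i, a i ≤ b i + ENNReal.ofReal η) :
    Tendsto a l (𝓝 0) := by
  refine ENNReal.tendsto_nhds_zero.2 fun ε hε => ?_
  obtain ⟨η, -, hη0, hηε⟩ := ENNReal.lt_iff_exists_real_btwn.1 (ENNReal.half_pos hε.ne')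
  obtain ⟨b, hb, hab⟩ := h η (ENNReal.ofReal_pos.1 hη0)
  filter_upwards [ENNReal.tendsto_nhds_zero.1 hb (ε / 2) (ENNReal.half_pos hε.ne')] with i hi
  calc a i ≤ b i + ENNReal.ofReal η := hab i
    _ ≤ ε / 2 + ε / 2 := add_le_add hi hηε.le
    _ = ε := ENNReal.add_halves ε

namespace MeasureTheory

variable {Ω : Type*} {m0 : MeasurableSpace Ω} {P : Measure Ω}

theorem TendstoInMeasure.add {ι E : Type*} [SeminormedAddCommGroup E] {l : Filter ι}
    {f f' : ι → Ω → E} {g g' : Ω → E} (hf : TendstoInMeasure P f l g)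
    (hf' : TendstoInMeasure P f' l g') :
    TendstoInMeasure P (f + f') l (g + g') := by
  rw [tendstoInMeasure_iff_norm] at hf hf' ⊢
  intro δ hδ
  have hsplit : ∀ i, P {ω | δ ≤ ‖(f + f') i ω - (g + g') ω‖}
      ≤ P {ω | δ / 2 ≤ ‖f i ω - g ω‖} + P {ω | δ / 2 ≤ ‖f' i ω - g' ω‖} := fun i => by
    refine (measure_mono fun ω hω => ?_).trans (measure_union_le _ _)
    by_contra hcon
    simp only [Set.mem_union, Set.mem_ofPred_eq, not_or, not_le] at hω hcon
    have : ‖(f + f') i ω - (g + g') ω‖ ≤ ‖f i ω - g ω‖ + ‖f' i ω - g' ω‖ := by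
      simpa [add_sub_add_comm] using norm_add_le (f i ω - g ω) (f' i ω - g' ω)
    linarith
  have hsum := (hf _ (half_pos hδ)).add (hf' _ (half_pos hδ))
  rw [add_zero] at hsum
  exact tendsto_of_tendsto_of_tendsto_of_le_of_le tendsto_const_nhds hsum (fun i => zero_le) hsplit

theorem measure_le_abs_le_ofReal_integral_sq_div [IsFiniteMeasure P] {f : Ω → ℝ}
    (hf : Integrable (fun ω => f ω ^ 2) P) {δ : ℝ} (hδ : 0 < δ) :
    P {ω | δ ≤ |f ω|} ≤ ENNReal.ofReal ((∫ ω, f ω ^ 2 ∂P) / δ ^ 2) := by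
  have hset : {ω | δ ≤ |f ω|} = {ω | δ ^ 2 ≤ f ω ^ 2} := by
    ext ω
    simp only [Set.mem_ofPred_eq, ← sq_abs (f ω)]
    exact (pow_le_pow_iff_left₀ hδ.le (abs_nonneg _) two_ne_zero).symm
  have hmarkov :=
    mul_meas_ge_le_integral_of_nonneg (ae_of_all _ fun ω => sq_nonneg (f ω)) hf (δ ^ 2)
  rw [hset, ← ofReal_measureReal (measure_ne_top _ _)]
  exact ENNReal.ofReal_le_ofReal ((le_div_iff₀ (by positivity)).2 (by linarith))

theorem condExp_sub_condExp_ae_eq_zero {m : MeasurableSpace Ω} (hm : m ≤ m0)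
    [SigmaFinite (P.trim hm)] {f : Ω → ℝ} (hf : Integrable f P) : P[f - P[f | m] | m] =ᵐ[P] 0 := by
  filter_upwards [condExp_sub hf integrable_condExp m] with ω hω
  rw [hω, condExp_of_stronglyMeasurable hm stronglyMeasurable_condExp integrable_condExp]
  simp

theorem integral_mul_eq_zero_of_condExp_ae_eq_zero {m : MeasurableSpace Ω} (hm : m ≤ m0)
    [SigmaFinite (P.trim hm)] {f g : Ω → ℝ} (hf : StronglyMeasurable[m] f)
    (hfg : Integrable (f * g) P) (hg : Integrable g P) (hg0 : P[g | m] =ᵐ[P] 0) : ∫ ω, f ω * g ω ∂P = 0 := by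
  calc ∫ ω, f ω * g ω ∂P = ∫ ω, P[f * g | m] ω ∂P := (integral_condExp hm).symm
    _ = ∫ ω, (f * P[g | m]) ω ∂P :=
      integral_congr_ae (condExp_mul_of_stronglyMeasurable_left hf hfg hg)
    _ = 0 := by
      rw [integral_eq_zero_of_ae]
      filter_upwards [hg0] with ω hω
      simp [hω]

theorem setIntegral_sq_sub_condExp_le [IsFiniteMeasure P] {m : MeasurableSpace Ω} (hm : m ≤ m0)
    {f : Ω → ℝ} (hf : MemLp f 2 P) {s : Set Ω} (hs : MeasurableSet[m] s) :
    ∫ ω in s, (f ω - P[f | m] ω) ^ 2 ∂P ≤ ∫ ω in s, P[fun ω => f ω ^ 2 | m] ω ∂P := by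
  rw [← setIntegral_condVar (hm := hm) ((hf.sub (hf.condExp one_le_two)).integrable_sq) hs]
  exact setIntegral_mono_ae integrable_condVar.integrableOn integrable_condExp.integrableOn
    (condVar_ae_le_condExp_sq hm hf)

def Filtration.ofMonotoneOnIic (m : ℕ → MeasurableSpace Ω) (N : ℕ)
    (hmono : MonotoneOn m (Set.Iic N)) (hle : ∀ k, m k ≤ m0) : Filtration ℕ m0 where
  seq k := m (min k N)
  mono' _ _ h := hmono (Set.mem_Iic.2 (min_le_right _ _)) (Set.mem_Iic.2 (min_le_right _ _))
    (min_le_min_right N h)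
  le' _ := hle _

theorem Filtration.ofMonotoneOnIic_apply_of_le {m : ℕ → MeasurableSpace Ω} {N : ℕ}
    {hmono : MonotoneOn m (Set.Iic N)} {hle : ∀ k, m k ≤ m0} {k : ℕ} (hk : k ≤ N) :
    Filtration.ofMonotoneOnIic m N hmono hle k = m k :=
  show m (min k N) = m k by rw [min_eq_left hk]

variable {ℱ : Filtration ℕ m0}

variable (P ℱ) in
def sumCondExpSq (ξ : ℕ → Ω → ℝ) (k : ℕ) : Ω → ℝ :=
  fun ω => ∑ j ∈ Icc 1 k, P[fun ω => ξ j ω ^ 2 | ℱ (j - 1)] ω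

theorem measurableSet_sumCondExpSq_le (ξ : ℕ → Ω → ℝ) (k : ℕ) (ε : ℝ) :
    MeasurableSet[ℱ (k - 1)] {ω | sumCondExpSq P ℱ ξ k ω ≤ ε} :=
  measurableSet_le (Finset.measurable_fun_sum _ fun j hj =>
    (stronglyMeasurable_condExp.mono (ℱ.mono (by grind))).measurable) measurable_const

theorem ae_condExp_sq_nonneg (ξ : ℕ → Ω → ℝ) :
    ∀ᵐ ω ∂P, ∀ k, 0 ≤ P[fun ω => ξ k ω ^ 2 | ℱ (k - 1)] ω :=
  ae_all_iff.2 fun _ => condExp_nonneg (ae_of_all _ fun _ => sq_nonneg _)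

theorem integral_sq_sum_Icc_eq_sum_integral_sq [IsFiniteMeasure P] {Y : ℕ → Ω → ℝ} :
    ∀ N, (∀ k ∈ Icc 1 N, MemLp (Y k) 2 P) → (∀ k ∈ Icc 1 N, StronglyMeasurable[ℱ k] (Y k)) →
      (∀ k ∈ Icc 1 N, P[Y k | ℱ (k - 1)] =ᵐ[P] 0) →
      ∫ ω, (∑ k ∈ Icc 1 N, Y k ω) ^ 2 ∂P = ∑ k ∈ Icc 1 N, ∫ ω, Y k ω ^ 2 ∂P
  | 0, _, _, _ => by simp
  | N + 1, hL2, hmeas, hcond => by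
    have hsub : Icc 1 N ⊆ Icc 1 (N + 1) := Icc_subset_Icc_right N.le_succ
    have htop : N + 1 ∈ Icc 1 (N + 1) := right_mem_Icc.2 N.succ_pos
    set S : Ω → ℝ := fun ω => ∑ k ∈ Icc 1 N, Y k ω
    have hS_L2 : MemLp S 2 P := memLp_finsetSum (Icc 1 N) fun k hk => hL2 k (hsub hk)
    have hS_meas : StronglyMeasurable[ℱ N] S := Finset.stronglyMeasurable_fun_sum _ fun k hk =>
      (hmeas k (hsub hk)).mono (ℱ.mono (mem_Icc.1 hk).2)
    have hY_L2 := hL2 (N + 1) htop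
    have hcross : ∫ ω, S ω * Y (N + 1) ω ∂P = 0 :=
      integral_mul_eq_zero_of_condExp_ae_eq_zero (ℱ.le N) hS_meas (hS_L2.integrable_mul hY_L2)
        (hY_L2.integrable one_le_two) (hcond (N + 1) htop)
    have hIH := integral_sq_sum_Icc_eq_sum_integral_sq N (fun k hk => hL2 k (hsub hk))
      (fun k hk => hmeas k (hsub hk)) (fun k hk => hcond k (hsub hk))
    have hSY : Integrable (fun ω => 2 * (S ω * Y (N + 1) ω)) P :=
      (hS_L2.integrable_mul hY_L2).const_mul 2
    calc ∫ ω, (∑ k ∈ Icc 1 (N + 1), Y k ω) ^ 2 ∂P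
        = ∫ ω, (S ω ^ 2 + 2 * (S ω * Y (N + 1) ω) + Y (N + 1) ω ^ 2) ∂P := by
          congr with ω
          rw [sum_Icc_succ_top (Nat.le_add_left 1 N)]
          ring
      _ = ∫ ω, S ω ^ 2 ∂P + 2 * ∫ ω, S ω * Y (N + 1) ω ∂P + ∫ ω, Y (N + 1) ω ^ 2 ∂P := by
          rw [integral_add _ hY_L2.integrable_sq, integral_add hS_L2.integrable_sq hSY,
            integral_const_mul]
          exact hS_L2.integrable_sq.add hSY
      _ = ∑ k ∈ Icc 1 (N + 1), ∫ ω, Y k ω ^ 2 ∂P := by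
          rw [hcross, hIH, sum_Icc_succ_top (Nat.le_add_left 1 N), mul_zero, add_zero]

theorem integral_sq_sum_indicator_sub_condExp_le [IsFiniteMeasure P] {ξ : ℕ → Ω → ℝ}
    {s : ℕ → Set Ω} {N : ℕ}
    (hL2 : ∀ k ∈ Icc 1 N, MemLp (ξ k) 2 P)
    (hmeas : ∀ k ∈ Icc 1 N, StronglyMeasurable[ℱ k] (ξ k))
    (hs : ∀ k ∈ Icc 1 N, MeasurableSet[ℱ (k - 1)] (s k)) :
    ∫ ω, (∑ k ∈ Icc 1 N, (s k).indicator (ξ k - P[ξ k | ℱ (k - 1)]) ω) ^ 2 ∂P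
      ≤ ∑ k ∈ Icc 1 N, ∫ ω in s k, P[fun ω => ξ k ω ^ 2 | ℱ (k - 1)] ω ∂P := by
  have hX_L2 : ∀ k ∈ Icc 1 N, MemLp (ξ k - P[ξ k | ℱ (k - 1)]) 2 P := fun k hk =>
    (hL2 k hk).sub ((hL2 k hk).condExp one_le_two)
  rw [integral_sq_sum_Icc_eq_sum_integral_sq (ℱ := ℱ) N
    (fun k hk => (hX_L2 k hk).indicator (ℱ.le _ _ (hs k hk)))
    (fun k hk => ((hmeas k hk).sub (stronglyMeasurable_condExp.mono (ℱ.mono (Nat.sub_le k 1)))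
      ).indicator (ℱ.mono (Nat.sub_le k 1) _ (hs k hk)))
    (fun k hk => by
      filter_upwards [condExp_indicator ((hX_L2 k hk).integrable one_le_two) (hs k hk),
        condExp_sub_condExp_ae_eq_zero (ℱ.le (k - 1)) ((hL2 k hk).integrable one_le_two)]
        with ω h1 h2
      simp [h1, h2])]
  refine sum_le_sum fun k hk => ?_
  have hsq : ∀ ω, (s k).indicator (ξ k - P[ξ k | ℱ (k - 1)]) ω ^ 2
      = (s k).indicator (fun ω => (ξ k ω - P[ξ k | ℱ (k - 1)] ω) ^ 2) ω := fun ω => by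
    by_cases h : ω ∈ s k <;> simp [h]
  simp_rw [hsq]
  rw [integral_indicator (ℱ.le _ _ (hs k hk))]
  exact setIntegral_sq_sub_condExp_le (ℱ.le _) (hL2 k hk) (hs k hk)

theorem sum_setIntegral_condExp_sq_le [IsProbabilityMeasure P] (ξ : ℕ → Ω → ℝ) (N : ℕ) {ε : ℝ}
    (hε : 0 ≤ ε) :
    ∑ k ∈ Icc 1 N, ∫ ω in {ω | sumCondExpSq P ℱ ξ k ω ≤ ε},
      P[fun ω => ξ k ω ^ 2 | ℱ (k - 1)] ω ∂P ≤ ε := by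
  set s : ℕ → Set Ω := fun k => {ω | sumCondExpSq P ℱ ξ k ω ≤ ε}
  have hs : ∀ k, MeasurableSet (s k) := fun k =>
    ℱ.le _ _ (measurableSet_sumCondExpSq_le ξ k ε)
  have hint : ∀ k, Integrable ((s k).indicator (P[fun ω => ξ k ω ^ 2 | ℱ (k - 1)])) P := fun k =>
    integrable_condExp.indicator (hs k)
  calc
    _ = ∫ ω, ∑ k ∈ Icc 1 N, (s k).indicator (P[fun ω => ξ k ω ^ 2 | ℱ (k - 1)]) ω ∂P := by
      rw [integral_finsetSum _ fun k _ => hint k]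
      exact sum_congr rfl fun k _ => (integral_indicator (hs k)).symm
    _ ≤ ∫ ω, ε ∂P := by
      refine integral_mono_ae (integrable_finsetSum _ fun k _ => hint k) (integrable_const ε) ?_
      filter_upwards [ae_condExp_sq_nonneg ξ] with ω hω
      simpa [s, Set.indicator_apply, sumCondExpSq] using sum_Icc_ite_sum_Icc_le hω hε N
    _ = ε := by simp

theorem measure_le_abs_sum_sub_condExp_le [IsProbabilityMeasure P] {ξ : ℕ → Ω → ℝ} {N : ℕ}
    (hL2 : ∀ k ∈ Icc 1 N, MemLp (ξ k) 2 P)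
    (hmeas : ∀ k ∈ Icc 1 N, StronglyMeasurable[ℱ k] (ξ k)) {δ ε : ℝ} (hδ : 0 < δ) (hε : 0 ≤ ε) :
    P {ω | δ ≤ |∑ k ∈ Icc 1 N, (ξ k ω - P[ξ k | ℱ (k - 1)] ω)|}
      ≤ P {ω | ε < sumCondExpSq P ℱ ξ N ω} + ENNReal.ofReal (ε / δ ^ 2) := by
  set s : ℕ → Set Ω := fun k => {ω | sumCondExpSq P ℱ ξ k ω ≤ ε}
  -- the martingale part with the increments taken only while `sumCondExpSq` stays below `ε`
  set M : Ω → ℝ := fun ω => ∑ k ∈ Icc 1 N, (s k).indicator (ξ k - P[ξ k | ℱ (k - 1)]) ω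
  have hs : ∀ k ∈ Icc 1 N, MeasurableSet[ℱ (k - 1)] (s k) := fun k _ =>
    measurableSet_sumCondExpSq_le ξ k ε
  have hM_L2 : MemLp M 2 P := memLp_finsetSum _ fun k hk =>
    ((hL2 k hk).sub ((hL2 k hk).condExp one_le_two)).indicator (ℱ.le _ _ (hs k hk))
  have hM_sq : ∫ ω, M ω ^ 2 ∂P ≤ ε :=
    (integral_sq_sum_indicator_sub_condExp_le hL2 hmeas hs).trans
      (sum_setIntegral_condExp_sq_le ξ N hε)
  have hincl : ∀ᵐ ω ∂P, δ ≤ |∑ k ∈ Icc 1 N, (ξ k ω - P[ξ k | ℱ (k - 1)] ω)| →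
      ε < sumCondExpSq P ℱ ξ N ω ∨ δ ≤ |M ω| := by
    filter_upwards [ae_condExp_sq_nonneg (P := P) (ℱ := ℱ) ξ] with ω hω hδω
    refine (lt_or_ge ε _).imp_right fun hB => ?_
    have hmem : ∀ k ∈ Icc 1 N, ω ∈ s k := fun k hk =>
      (sum_le_sum_of_subset_of_nonneg (Icc_subset_Icc_right (mem_Icc.1 hk).2)
        fun j _ _ => hω j).trans hB
    have hM : M ω = ∑ k ∈ Icc 1 N, (ξ k ω - P[ξ k | ℱ (k - 1)] ω) :=
      sum_congr rfl fun k hk => Set.indicator_of_mem (hmem k hk) _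
    rwa [hM]
  calc _ ≤ P ({ω | ε < sumCondExpSq P ℱ ξ N ω} ∪ {ω | δ ≤ |M ω|}) := measure_mono_ae hincl
    _ ≤ P {ω | ε < sumCondExpSq P ℱ ξ N ω} + P {ω | δ ≤ |M ω|} := measure_union_le _ _
    _ ≤ _ := by
      gcongr
      refine (measure_le_abs_le_ofReal_integral_sq_div hM_L2.integrable_sq hδ).trans ?_
      gcongr

theorem tendstoInMeasure_sum_sub_condExp [IsProbabilityMeasure P] {ℱ : ℕ → Filtration ℕ m0}
    {ζ : ℕ → ℕ → Ω → ℝ} {l : Filter ℕ}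
    (hL2 : ∀ n, ∀ k ∈ Icc 1 n, MemLp (ζ n k) 2 P)
    (hmeas : ∀ n, ∀ k ∈ Icc 1 n, StronglyMeasurable[ℱ n k] (ζ n k))
    (hsq : TendstoInMeasure P (fun n => sumCondExpSq P (ℱ n) (ζ n) n) l 0) :
    TendstoInMeasure P (fun n ω => ∑ k ∈ Icc 1 n, (ζ n k ω - P[ζ n k | ℱ n (k - 1)] ω)) l 0 := by
  rw [tendstoInMeasure_iff_dist] at hsq ⊢
  intro δ hδ
  refine ENNReal.tendsto_nhds_zero_of_forall_le_add fun η hη =>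
    ⟨_, hsq (η * δ ^ 2) (by positivity), fun n => ?_⟩
  have hrow :=
    measure_le_abs_sum_sub_condExp_le (hL2 n) (hmeas n) hδ (by positivity : 0 ≤ η * δ ^ 2)
  rw [mul_div_cancel_right₀ _ (by positivity)] at hrow
  simp only [Real.dist_eq, Pi.zero_apply, sub_zero]
  exact hrow.trans (add_le_add (measure_mono (Set.ofPred_subset_ofPred.2 fun _ hω =>
    hω.le.trans (le_abs_self _))) le_rfl)

end MeasureTheory

/-- **Convergence in probability for triangular arrays** (Lemma of Genon-Catalot–Jacod type).
If the conditional expectations of the row sums converge in probability to `U` and the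
conditional expectations of the squares sum to `0` in probability, then the row sums
`∑_{k=1}^n ζ_k^n` converge in probability to `U`. -/
theorem triangular_array_convergence_in_probability
    {Ω : Type*} [m0 : MeasurableSpace Ω] (P : Measure Ω) [IsProbabilityMeasure P]
    -- nested sub-σ-algebras `G_0^n ⊆ G_1^n ⊆ ⋯ ⊆ G_n^n`
    (G : ℕ → ℕ → MeasurableSpace Ω)
    (hGle : ∀ n k, G n k ≤ m0)
    (hGmono : ∀ n, ∀ k k', k ≤ k' → k' ≤ n → G n k ≤ G n k')
    -- the triangular array: `ζ n k` is square integrable and `G n k`-measurable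
    (ζ : ℕ → ℕ → Ω → ℝ)
    (hL2 : ∀ n k, 1 ≤ k → k ≤ n → MemLp (ζ n k) 2 P)
    (hmeas : ∀ n k, 1 ≤ k → k ≤ n → Measurable[G n k] (ζ n k))
    (U : Ω → ℝ)
    -- (i) the conditional means sum to `U` in probability
    (hcond_mean : TendstoInMeasure P
      (fun n ω => ∑ k ∈ Finset.Icc 1 n, (P[ζ n k | G n (k - 1)]) ω) atTop U)
    -- (ii) the conditional second moments sum to `0` in probability
    (hcond_sq : TendstoInMeasure P
      (fun n ω => ∑ k ∈ Finset.Icc 1 n, (P[fun ω' => (ζ n k ω') ^ 2 | G n (k - 1)]) ω)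
      atTop (fun _ => 0)) :
    TendstoInMeasure P (fun n ω => ∑ k ∈ Finset.Icc 1 n, ζ n k ω) atTop U := by
  set ℱ : ℕ → Filtration ℕ m0 := fun n => Filtration.ofMonotoneOnIic (G n) n
    (fun k _ k' hk' hkk' => hGmono n k k' hkk' hk') (hGle n)
  have hℱ : ∀ n k, k ≤ n → ℱ n k = G n k := fun n k hk =>
    Filtration.ofMonotoneOnIic_apply_of_le hk
  have hsum : ∀ n (φ : ℕ → MeasurableSpace Ω → Ω → ℝ) ω,
      ∑ k ∈ Icc 1 n, φ k (ℱ n (k - 1)) ω = ∑ k ∈ Icc 1 n, φ k (G n (k - 1)) ω := fun n φ ω =>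
    sum_congr rfl fun k hk => by rw [hℱ n (k - 1) (by grind)]
  have hcentered := tendstoInMeasure_sum_sub_condExp (ℱ := ℱ) (ζ := ζ)
    (fun n k hk => hL2 n k (mem_Icc.1 hk).1 (mem_Icc.1 hk).2)
    (fun n k hk => by
      rw [hℱ n k (mem_Icc.1 hk).2]
      exact (hmeas n k (mem_Icc.1 hk).1 (mem_Icc.1 hk).2).stronglyMeasurable)
    (hcond_sq.congr_left fun n => ae_of_all _ fun ω =>
      (hsum n (fun k m => P[fun ω' => ζ n k ω' ^ 2 | m]) ω).symm)
  refine (hcentered.add hcond_mean).congr (fun n => ae_of_all _ fun ω => ?_)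
    (ae_of_all _ fun ω => ?_)
  · rw [Pi.add_apply, Pi.add_apply, sum_sub_distrib, hsum n (fun k m => P[ζ n k | m]) ω,
      sub_add_cancel]
  · simp

end
end
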